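/- arXiv:1904.09220 — 8 statements merged into one kernel-verified Lean document; each statement's English description precedes it below -/
import Mathlib

section
/- Let V be a finite-dimensional real vector space, W a real vector space, p : W → V a surjective linear map, T : V → W an injective linear map whose image equals ker p, α : V → W a linear map with p ∘ α = id_V, and B : V → V a linear map. Let A : ℂ ⊗_ℝ V → ℂ ⊗_ℝ W be the complex-linear map A = α_ℂ + i·(T ∘ B)_ℂ, where the subscript ℂ denotes complexification, and let conjugation on ℂ ⊗_ℝ W be induced by complex conjugation on the ℂ factor. Then A(ℂ ⊗_ℝ V) ∩ conj(A(ℂ ⊗_ℝ V)) = 0 if and only if B is bijective. -/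
/-!
Conjugation carries the image of `A = α_ℂ + i (T B)_ℂ` onto the image of `A' = α_ℂ - i (T B)_ℂ`.
Both `A` and `A'` are sections of `p_ℂ`, so their images meet only in `0` iff
`A - A' = 2i (T B)_ℂ` is injective, i.e. (`ℂ` being faithfully flat over `ℝ`) iff `T B`, equivalently
`B`, is injective. In finite dimension that is bijectivity.
-/

open TensorProduct

section RangeInfRange

variable {R M N : Type*} [Ring R] [AddCommGroup M] [Module R M] [AddCommGroup N] [Module R N]

theorem LinearMap.range_inf_range_eq_bot_iff_injective_sub {A A' : M →ₗ[R] N} (P : N →ₗ[R] M)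
    (hA : P ∘ₗ A = LinearMap.id) (hA' : P ∘ₗ A' = LinearMap.id) :
    LinearMap.range A ⊓ LinearMap.range A' = ⊥ ↔ Function.Injective (A - A') := by
  have hPA (u : M) : P (A u) = u := LinearMap.congr_fun hA u
  have hPA' (u : M) : P (A' u) = u := LinearMap.congr_fun hA' u
  rw [← LinearMap.ker_eq_bot, Submodule.eq_bot_iff, Submodule.eq_bot_iff]
  constructor
  · intro h u hu
    have hAu : A u = A' u := sub_eq_zero.mp hu
    have hAu0 : A u = 0 := h _ (Submodule.mem_inf.mpr ⟨⟨u, rfl⟩, ⟨u, hAu.symm⟩⟩)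
    simpa [hPA] using congr(P $hAu0)
  · rintro h x hx
    obtain ⟨⟨u, rfl⟩, ⟨u', hu'⟩⟩ := Submodule.mem_inf.mp hx
    have hu : u' = u := by simpa [hPA, hPA'] using congr(P $hu')
    subst hu
    rw [h u' (sub_eq_zero.mpr hu'.symm), map_zero]

end RangeInfRange

section ComplexConj

variable {V W : Type*} [AddCommGroup V] [Module ℝ V] [AddCommGroup W] [Module ℝ W]

variable (W) in
noncomputable def complexConj : ℂ ⊗[ℝ] W →ₗ[ℝ] ℂ ⊗[ℝ] W :=
  TensorProduct.map Complex.conjAe.toLinearMap LinearMap.id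

@[simp]
theorem complexConj_tmul (z : ℂ) (w : W) :
    complexConj W (z ⊗ₜ w) = (starRingEnd ℂ) z ⊗ₜ w :=
  rfl

theorem complexConj_involutive : Function.Involutive (complexConj W) := by
  intro x
  induction x using TensorProduct.induction_on with
  | zero => simp
  | tmul z w => simp
  | add x y hx hy => simp only [map_add, hx, hy]

theorem complexConj_smul (c : ℂ) (x : ℂ ⊗[ℝ] W) :
    complexConj W (c • x) = (starRingEnd ℂ) c • complexConj W x := by
  induction x using TensorProduct.induction_on with
  | zero => simp
  | tmul z w => simp [smul_tmul']
  | add x y hx hy => simp only [smul_add, map_add, hx, hy]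

theorem complexConj_comp_baseChange_add_I_smul (f g : V →ₗ[ℝ] W) :
    complexConj W ∘ₗ (f.baseChange ℂ + Complex.I • g.baseChange ℂ).restrictScalars ℝ =
      (f.baseChange ℂ - Complex.I • g.baseChange ℂ).restrictScalars ℝ ∘ₗ complexConj V := by
  ext x
  simp [complexConj_smul, sub_eq_add_neg]

theorem map_complexConj_range_baseChange_add_I_smul (f g : V →ₗ[ℝ] W) :
    ((LinearMap.range (f.baseChange ℂ + Complex.I • g.baseChange ℂ)).restrictScalars ℝ).map
        (complexConj W) =
      (LinearMap.range (f.baseChange ℂ - Complex.I • g.baseChange ℂ)).restrictScalars ℝ := by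
  rw [← LinearMap.range_restrictScalars, ← LinearMap.range_comp,
    complexConj_comp_baseChange_add_I_smul, LinearMap.range_comp_of_range_eq_top _
      (LinearMap.range_eq_top.mpr complexConj_involutive.surjective),
    LinearMap.range_restrictScalars]

theorem range_inf_map_complexConj_range_eq_bot_iff (f g : V →ₗ[ℝ] W) (q : W →ₗ[ℝ] V)
    (hf : q ∘ₗ f = LinearMap.id) (hg : q ∘ₗ g = 0) :
    (LinearMap.range (f.baseChange ℂ + Complex.I • g.baseChange ℂ)).restrictScalars ℝ ⊓
        ((LinearMap.range (f.baseChange ℂ + Complex.I • g.baseChange ℂ)).restrictScalars ℝ).map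
          (complexConj W) = ⊥ ↔
      Function.Injective g := by
  have hqf : q.baseChange ℂ ∘ₗ f.baseChange ℂ = LinearMap.id := by
    rw [← LinearMap.baseChange_comp, hf, LinearMap.baseChange_id]
  have hqg : q.baseChange ℂ ∘ₗ g.baseChange ℂ = 0 := by
    rw [← LinearMap.baseChange_comp, hg, LinearMap.baseChange_zero]
  have hsub : (f.baseChange ℂ + Complex.I • g.baseChange ℂ) -
      (f.baseChange ℂ - Complex.I • g.baseChange ℂ) = (2 * Complex.I) • g.baseChange ℂ := by
    rw [add_sub_sub_cancel, ← add_smul, two_mul]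
  rw [map_complexConj_range_baseChange_add_I_smul, ← Submodule.restrictScalars_inf,
    Submodule.restrictScalars_eq_bot_iff,
    LinearMap.range_inf_range_eq_bot_iff_injective_sub (q.baseChange ℂ)
      (by rw [LinearMap.comp_add, LinearMap.comp_smul, hqf, hqg, smul_zero, add_zero])
      (by rw [LinearMap.comp_sub, LinearMap.comp_smul, hqf, hqg, smul_zero, sub_zero]),
    hsub, ← LinearMap.ker_eq_bot, LinearMap.ker_smul _ _ (by simp), LinearMap.ker_eq_bot,
    LinearMap.baseChange_eq_ltensor, Module.FaithfullyFlat.lTensor_injective_iff_injective]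

end ComplexConj

theorem totally_real_pair_condition_general
    {V W : Type*} [AddCommGroup V] [Module ℝ V] [FiniteDimensional ℝ V]
    [AddCommGroup W] [Module ℝ W]
    (p : W →ₗ[ℝ] V) (T : V →ₗ[ℝ] W) (hT : Function.Injective T)
    (hTp : LinearMap.range T = LinearMap.ker p)
    (α : V →ₗ[ℝ] W) (hα : p.comp α = LinearMap.id)
    (B : V →ₗ[ℝ] V) :
    ((LinearMap.range
        (LinearMap.baseChange ℂ α +
          Complex.I • LinearMap.baseChange ℂ (T.comp B))).restrictScalars ℝ ⊓
      Submodule.map (TensorProduct.map Complex.conjAe.toLinearMap (LinearMap.id : W →ₗ[ℝ] W))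
        ((LinearMap.range
            (LinearMap.baseChange ℂ α +
              Complex.I • LinearMap.baseChange ℂ (T.comp B))).restrictScalars ℝ) = ⊥)
    ↔ Function.Bijective B := by
  have hpT : p ∘ₗ T = 0 := LinearMap.range_le_ker_iff.mp hTp.le
  refine (range_inf_map_complexConj_range_eq_bot_iff α (T ∘ₗ B) p hα
    (by rw [← LinearMap.comp_assoc, hpT, LinearMap.zero_comp])).trans ?_
  rw [LinearMap.coe_comp, hT.of_comp_iff]
  exact ⟨fun hB => ⟨hB, LinearMap.injective_iff_surjective.mp hB⟩, Function.Bijective.injective⟩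

/-- Pointwise condition characterizing when the complex horizontal distribution
`A = α_ℂ + i (T∘B)_ℂ` determines an almost complex structure: the image of `A`
intersects its conjugate trivially iff `B` is bijective. -/
theorem totally_real_pair_condition
    {V W : Type*} [AddCommGroup V] [Module ℝ V] [FiniteDimensional ℝ V]
    [AddCommGroup W] [Module ℝ W]
    (p : W →ₗ[ℝ] V) (hp : Function.Surjective p)
    (T : V →ₗ[ℝ] W) (hT : Function.Injective T)
    (hTp : LinearMap.range T = LinearMap.ker p)
    (α : V →ₗ[ℝ] W) (hα : p.comp α = LinearMap.id)
    (B : V →ₗ[ℝ] V) :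
    ((LinearMap.range
        (LinearMap.baseChange ℂ α +
          Complex.I • LinearMap.baseChange ℂ (T.comp B))).restrictScalars ℝ ⊓
      Submodule.map (TensorProduct.map Complex.conjAe.toLinearMap (LinearMap.id : W →ₗ[ℝ] W))
        ((LinearMap.range
            (LinearMap.baseChange ℂ α +
              Complex.I • LinearMap.baseChange ℂ (T.comp B))).restrictScalars ℝ) = ⊥)
    ↔ Function.Bijective B :=
  totally_real_pair_condition_general p T hT hTp α hα B
end

section
/- Let V be a finite-dimensional real vector space, W a real vector space, p : W → V a surjective linear map, T : V → W an injective linear map whose image equals ker p, α : V → W a linear map with p ∘ α = id_V, and B : V → V a bijective linear map. Denote by T⁻¹ : ker p → V the inverse of T onto its image, and note that id_W − α ∘ p maps W into ker p. Define J : W → W by J = −α ∘ B⁻¹ ∘ T⁻¹ ∘ (id_W − α ∘ p) + T ∘ B ∘ p. Then: (i) J ∘ J = −id_W; (ii) J ∘ α = T ∘ B; (iii) the restriction of J to ker p equals −α ∘ B⁻¹ ∘ T⁻¹; (iv) the (−i)-eigenspace of the complexification of J equals the image of A := α_ℂ + i·(T ∘ B)_ℂ : ℂ ⊗_ℝ V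 → ℂ ⊗_ℝ W. -/
/-!
The maps `q = p` and `r = B⁻¹ ∘ T⁻¹ ∘ (id − α ∘ p)` split `W` as `V × V`, with inverse
`(u, v) ↦ α u + T (B v)`, and `J = (T ∘ B) ∘ q − α ∘ r` is the standard complex structure
`(u, v) ↦ (−v, u)` in these coordinates. For a complex structure built this way from a splitting
`x = a (q x) + b (r x)`, the equation `J x = −i x` forces `r x = i q x`, so the `(−i)`-eigenvectors
are exactly the vectors `a u + i b u`.
-/

namespace LinearMap

section Splitting

variable {R U E : Type*} [Ring R] [AddCommGroup U] [Module R U] [AddCommGroup E] [Module R E]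

/-- `(q, r) : E → U × U` is a linear isomorphism with inverse `(u, v) ↦ a u + b v`. -/
structure IsSplitting (a b : U →ₗ[R] E) (q r : E →ₗ[R] U) : Prop where
  q_comp_a : q ∘ₗ a = id
  q_comp_b : q ∘ₗ b = 0
  r_comp_a : r ∘ₗ a = 0
  r_comp_b : r ∘ₗ b = id
  a_comp_q_add_b_comp_r : a ∘ₗ q + b ∘ₗ r = id

def complexStructureOfSplitting (a b : U →ₗ[R] E) (q r : E →ₗ[R] U) : E →ₗ[R] E :=
  b ∘ₗ q - a ∘ₗ r

namespace IsSplitting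

variable {a b : U →ₗ[R] E} {q r : E →ₗ[R] U}

theorem complexStructure_comp_a (h : IsSplitting a b q r) :
    complexStructureOfSplitting a b q r ∘ₗ a = b := by
  rw [complexStructureOfSplitting, sub_comp, comp_assoc, comp_assoc, h.q_comp_a, h.r_comp_a,
    comp_zero, sub_zero, comp_id]

theorem complexStructure_comp_b (h : IsSplitting a b q r) :
    complexStructureOfSplitting a b q r ∘ₗ b = -a := by
  rw [complexStructureOfSplitting, sub_comp, comp_assoc, comp_assoc, h.q_comp_b, h.r_comp_b,
    comp_zero, zero_sub, comp_id]

theorem complexStructure_comp_self (h : IsSplitting a b q r) :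
    complexStructureOfSplitting a b q r ∘ₗ complexStructureOfSplitting a b q r = -id := by
  calc _ = complexStructureOfSplitting a b q r ∘ₗ (b ∘ₗ q - a ∘ₗ r) := rfl
    _ = -(a ∘ₗ q + b ∘ₗ r) := by
      rw [comp_sub, ← comp_assoc, ← comp_assoc, h.complexStructure_comp_a,
        h.complexStructure_comp_b, neg_comp, neg_add]
      abel
    _ = -id := by rw [h.a_comp_q_add_b_comp_r]

end IsSplitting

end Splitting

section CommRing

variable {R U E : Type*} [CommRing R] [AddCommGroup U] [Module R U] [AddCommGroup E] [Module R E]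
  {a b : U →ₗ[R] E} {q r : E →ₗ[R] U}

theorem IsSplitting.eigenspace_neg_eq_range (h : IsSplitting a b q r) {i : R} (hi : i * i = -1) :
    Module.End.eigenspace (complexStructureOfSplitting a b q r) (-i) = range (a + i • b) := by
  have hJa (u : U) := LinearMap.congr_fun h.complexStructure_comp_a u
  have hJb (u : U) := LinearMap.congr_fun h.complexStructure_comp_b u
  have hqa (u : U) := LinearMap.congr_fun h.q_comp_a u
  have hqb (u : U) := LinearMap.congr_fun h.q_comp_b u
  simp only [coe_comp, Function.comp_apply, neg_apply, id_apply, zero_apply] at hJa hJb hqa hqb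
  ext x
  rw [Module.End.mem_eigenspace_iff]
  constructor
  · intro hx
    have hdecomp : a (q x) + b (r x) = x := LinearMap.congr_fun h.a_comp_q_add_b_comp_r x
    -- Apply `q` to `J x = -i • x`, where `J x = b (q x) - a (r x)`.
    have hrq : r x = i • q x := by
      have hq := congr(q $hx)
      rw [complexStructureOfSplitting, sub_apply, comp_apply, comp_apply, map_sub, hqb, hqa,
        zero_sub, map_smul, neg_smul, neg_inj] at hq
      exact hq
    refine ⟨q x, ?_⟩
    rw [add_apply, smul_apply, ← map_smul, ← hrq, hdecomp]
  · rintro ⟨u, rfl⟩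
    rw [add_apply, smul_apply, map_add, map_smul, hJa, hJb, smul_neg, smul_add, smul_smul,
      neg_mul, hi, neg_neg, one_smul, neg_smul]
    abel

variable {A : Type*} [CommRing A] [Algebra R A]

theorem IsSplitting.baseChange (h : IsSplitting a b q r) :
    IsSplitting (a.baseChange A) (b.baseChange A) (q.baseChange A) (r.baseChange A) where
  q_comp_a := by rw [← baseChange_comp, h.q_comp_a, baseChange_id]
  q_comp_b := by rw [← baseChange_comp, h.q_comp_b, baseChange_zero]
  r_comp_a := by rw [← baseChange_comp, h.r_comp_a, baseChange_zero]
  r_comp_b := by rw [← baseChange_comp, h.r_comp_b, baseChange_id]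
  a_comp_q_add_b_comp_r := by
    rw [← baseChange_comp, ← baseChange_comp, ← baseChange_add, h.a_comp_q_add_b_comp_r,
      baseChange_id]

theorem baseChange_complexStructureOfSplitting :
    (complexStructureOfSplitting a b q r).baseChange A =
      complexStructureOfSplitting (a.baseChange A) (b.baseChange A) (q.baseChange A)
        (r.baseChange A) := by
  rw [complexStructureOfSplitting, baseChange_sub, baseChange_comp, baseChange_comp]
  rfl

end CommRing

section Pair

variable {R V W : Type*} [Ring R] [AddCommGroup V] [Module R V] [AddCommGroup W] [Module R W]

theorem comp_comp_eq_of_range_le_range {X : Type*} [AddCommGroup X] [Module R X]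
    {T : V →ₗ[R] W} {Tinv : W →ₗ[R] V} (hTinv : Tinv ∘ₗ T = id) {f : X →ₗ[R] W}
    (hf : range f ≤ range T) : T ∘ₗ Tinv ∘ₗ f = f := by
  ext x
  obtain ⟨v, hv⟩ := hf (mem_range_self f x)
  rw [comp_apply, comp_apply, ← hv, ← comp_apply Tinv, hTinv, id_apply]

theorem isSplitting_of_range_eq_ker {p : W →ₗ[R] V} {T α : V →ₗ[R] W}
    {B Binv : V →ₗ[R] V} {Tinv : W →ₗ[R] V} (hTp : range T = ker p) (hα : p ∘ₗ α = id)
    (hB1 : Binv ∘ₗ B = id) (hB2 : B ∘ₗ Binv = id) (hTinv : Tinv ∘ₗ T = id) :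
    IsSplitting α (T ∘ₗ B) p (Binv ∘ₗ Tinv ∘ₗ (id - α ∘ₗ p)) := by
  have hpT : p ∘ₗ T = 0 := range_le_ker_iff.mp hTp.le
  have hproj : T ∘ₗ Tinv ∘ₗ (id - α ∘ₗ p) = id - α ∘ₗ p := by
    refine comp_comp_eq_of_range_le_range hTinv (hTp ▸ range_le_ker_iff.mpr ?_)
    rw [comp_sub, comp_id, ← comp_assoc, hα, id_comp, sub_self]
  have hpTB : p ∘ₗ T ∘ₗ B = 0 := by rw [← comp_assoc, hpT, zero_comp]
  refine ⟨hα, hpTB, ?_, ?_, ?_⟩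
  · rw [comp_assoc, comp_assoc, sub_comp, id_comp, comp_assoc, hα, comp_id, sub_self,
      comp_zero, comp_zero]
  · rw [comp_assoc, comp_assoc, sub_comp, id_comp, comp_assoc, hpTB, comp_zero, sub_zero,
      ← comp_assoc B T Tinv, hTinv, id_comp, hB1]
  · rw [comp_assoc _ B T, ← comp_assoc _ Binv B, hB2, id_comp, hproj, add_sub_cancel]

end Pair

end LinearMap

theorem formula_JA_pointwise_general
    {V W : Type*} [AddCommGroup V] [Module ℝ V]
    [AddCommGroup W] [Module ℝ W]
    (p : W →ₗ[ℝ] V)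
    (T : V →ₗ[ℝ] W)
    (hTp : LinearMap.range T = LinearMap.ker p)
    (α : V →ₗ[ℝ] W) (hα : p.comp α = LinearMap.id)
    (B Binv : V →ₗ[ℝ] V)
    (hB1 : Binv.comp B = LinearMap.id) (hB2 : B.comp Binv = LinearMap.id)
    (Tinv : W →ₗ[ℝ] V) (hTinv : Tinv.comp T = LinearMap.id)
    (J : W →ₗ[ℝ] W)
    (hJ : J = -(α.comp (Binv.comp (Tinv.comp (LinearMap.id - α.comp p))))
          + T.comp (B.comp p)) :
    J.comp J = -LinearMap.id ∧
    J.comp α = T.comp B ∧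
    (∀ w ∈ LinearMap.ker p, J w = -(α (Binv (Tinv w)))) ∧
    Module.End.eigenspace (LinearMap.baseChange ℂ J) (-Complex.I) =
      LinearMap.range
        (LinearMap.baseChange ℂ α + Complex.I • LinearMap.baseChange ℂ (T.comp B)) := by
  have hsplit := LinearMap.isSplitting_of_range_eq_ker hTp hα hB1 hB2 hTinv
  have hJsplit : J = LinearMap.complexStructureOfSplitting α (T ∘ₗ B) p
      (Binv ∘ₗ Tinv ∘ₗ (LinearMap.id - α ∘ₗ p)) := by
    rw [hJ, LinearMap.complexStructureOfSplitting, LinearMap.comp_assoc, neg_add_eq_sub]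
  refine ⟨hJsplit ▸ hsplit.complexStructure_comp_self, hJsplit ▸ hsplit.complexStructure_comp_a,
    fun w hw => ?_, ?_⟩
  · rw [LinearMap.mem_ker] at hw
    simp [hJ, hw]
  · rw [hJsplit, LinearMap.baseChange_complexStructureOfSplitting]
    exact hsplit.baseChange.eigenspace_neg_eq_range Complex.I_mul_I

/-- Pointwise content of formula (FormulJA) for the almost complex structure `J_A`
associated to a pair `(α, B)`: `J∘J = -id`, `J∘α = T∘B`, `J` on `ker p` is
`-α∘B⁻¹∘T⁻¹`, and the `(-i)`-eigenspace of the complexification of `J` is the image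
of `A = α_ℂ + i (T∘B)_ℂ`. Here `Tinv` is a linear left inverse of `T` (hence the
inverse of `T` on its image `ker p`) and `Binv` the inverse of `B`. -/
theorem formula_JA_pointwise
    {V W : Type*} [AddCommGroup V] [Module ℝ V] [FiniteDimensional ℝ V]
    [AddCommGroup W] [Module ℝ W]
    (p : W →ₗ[ℝ] V) (hp : Function.Surjective p)
    (T : V →ₗ[ℝ] W) (hT : Function.Injective T)
    (hTp : LinearMap.range T = LinearMap.ker p)
    (α : V →ₗ[ℝ] W) (hα : p.comp α = LinearMap.id)
    (B Binv : V →ₗ[ℝ] V)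
    (hB1 : Binv.comp B = LinearMap.id) (hB2 : B.comp Binv = LinearMap.id)
    (Tinv : W →ₗ[ℝ] V) (hTinv : Tinv.comp T = LinearMap.id)
    (J : W →ₗ[ℝ] W)
    (hJ : J = -(α.comp (Binv.comp (Tinv.comp (LinearMap.id - α.comp p))))
          + T.comp (B.comp p)) :
    J.comp J = -LinearMap.id ∧
    J.comp α = T.comp B ∧
    (∀ w ∈ LinearMap.ker p, J w = -(α (Binv (Tinv w)))) ∧
    Module.End.eigenspace (LinearMap.baseChange ℂ J) (-Complex.I) =
      LinearMap.range
        (LinearMap.baseChange ℂ α + Complex.I • LinearMap.baseChange ℂ (T.comp B)) :=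
  formula_JA_pointwise_general p T hTp α hα B Binv hB1 hB2 Tinv hTinv J hJ
end

section
/- Let V and U be vector spaces over a field of characteristic zero and let p ≥ 2 be an integer. Let β be a (p+1)-linear map from V^{p+1} to U which is antisymmetric in its first two entries, symmetric in its last p−1 entries, and satisfies Circ β = 0. Then β = (p/(p+1)!) · Alt₂ ( Sym_{2,…,p+1} β ). -/
open Equiv Finset

private lemma decomposeFin_fst {n : ℕ} (σ : Equiv.Perm (Fin (n+1))) :
    (Equiv.Perm.decomposeFin σ).1 = σ 0 := by
  simpa using (Equiv.Perm.decomposeFin_symm_apply_zero (Equiv.Perm.decomposeFin σ).1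
    (Equiv.Perm.decomposeFin σ).2).symm

private lemma card_fix0 (n : ℕ) :
    (Finset.univ.filter fun σ : Equiv.Perm (Fin (n+1)) => σ 0 = 0).card = n.factorial := by
  rw [Finset.card_equiv Equiv.Perm.decomposeFin
      (t := Finset.univ.filter fun x : Fin (n+1) × Equiv.Perm (Fin n) => x.1 = 0)
      (fun σ => by simp [decomposeFin_fst])]
  have h : (Finset.univ.filter fun x : Fin (n+1) × Equiv.Perm (Fin n) => x.1 = 0)
      = {(0 : Fin (n+1))} ×ˢ Finset.univ := by
    ext x
    simp only [Finset.mem_filter, Finset.mem_univ, true_and, Finset.mem_product,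
      Finset.mem_singleton, and_true]
  rw [h, Finset.card_product, Finset.card_singleton, one_mul, Finset.card_univ,
    Fintype.card_perm, Fintype.card_fin]

private lemma decomposeFin_cond {n : ℕ} (a : Fin (n+2)) (τ : Equiv.Perm (Fin (n+1))) :
    (Equiv.Perm.decomposeFin.symm (a, τ) 0 = 0 ∧ Equiv.Perm.decomposeFin.symm (a, τ) 1 = 1)
      ↔ (a = 0 ∧ τ 0 = 0) := by
  rw [Equiv.Perm.decomposeFin_symm_apply_zero, Equiv.Perm.decomposeFin_symm_apply_one]
  constructor
  · rintro ⟨rfl, h⟩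
    rw [Equiv.swap_self, Equiv.refl_apply, ← Fin.succ_zero_eq_one, Fin.succ_inj] at h
    exact ⟨rfl, h⟩
  · rintro ⟨rfl, h⟩
    rw [h, Equiv.swap_self, Equiv.refl_apply, Fin.succ_zero_eq_one]
    exact ⟨rfl, rfl⟩

private lemma card_fix01 (n : ℕ) :
    (Finset.univ.filter fun σ : Equiv.Perm (Fin (n+2)) => σ 0 = 0 ∧ σ 1 = 1).card
      = n.factorial := by
  rw [Finset.card_equiv Equiv.Perm.decomposeFin
      (t := Finset.univ.filter fun x : Fin (n+2) × Equiv.Perm (Fin (n+1)) =>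
        x.1 = 0 ∧ x.2 0 = 0)
      (fun σ => by
        have h := decomposeFin_cond (Equiv.Perm.decomposeFin σ).1 (Equiv.Perm.decomposeFin σ).2
        simp only [Prod.mk.eta, Equiv.symm_apply_apply] at h
        simp [← h])]
  have h : (Finset.univ.filter fun x : Fin (n+2) × Equiv.Perm (Fin (n+1)) =>
        x.1 = 0 ∧ x.2 0 = 0)
      = {(0 : Fin (n+2))} ×ˢ (Finset.univ.filter fun τ : Equiv.Perm (Fin (n+1)) => τ 0 = 0) := by
    ext x
    simp only [Finset.mem_filter, Finset.mem_univ, true_and, Finset.mem_product,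
      Finset.mem_singleton]
  rw [h, Finset.card_product, Finset.card_singleton, one_mul, card_fix0]

/-- A `(p+1)`-linear map `β`, antisymmetric in its first two entries, symmetric in
its last `p-1` entries and with `Circ β = 0`, satisfies
`β = (p/(p+1)!) • Alt₂ (Sym_{2,…,p+1} β)`. -/
theorem beta_eq_alt_sym
    {K V U : Type*} [Field K] [CharZero K] [AddCommGroup V] [Module K V]
    [AddCommGroup U] [Module K U]
    (p : ℕ) (hp : 2 ≤ p)
    (β : MultilinearMap K (fun _ : Fin (p + 1) => V) U)
    (hanti : ∀ v : Fin (p + 1) → V,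
      β (fun i => v (Equiv.swap (0 : Fin (p + 1)) 1 i)) = - β v)
    (hsym : ∀ σ : Equiv.Perm (Fin (p + 1)), σ 0 = 0 → σ 1 = 1 →
      ∀ v : Fin (p + 1) → V, β (fun i => v (σ i)) = β v)
    (hcirc : ∀ v : Fin (p + 1) → V,
      β v
      + β (fun i => v ((Equiv.swap (0 : Fin (p + 1)) 2 * Equiv.swap 0 1 :
          Equiv.Perm (Fin (p + 1))) i))
      + β (fun i => v ((Equiv.swap (0 : Fin (p + 1)) 1 * Equiv.swap 0 2 :
          Equiv.Perm (Fin (p + 1))) i)) = 0) :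
    ∀ v : Fin (p + 1) → V,
      β v = ((p : K) / (Nat.factorial (p + 1) : K)) •
        ((∑ σ ∈ Finset.univ.filter (fun σ : Equiv.Perm (Fin (p + 1)) => σ 0 = 0),
            β (fun i => v (σ i)))
         -
         (∑ σ ∈ Finset.univ.filter (fun σ : Equiv.Perm (Fin (p + 1)) => σ 0 = 0),
            β (fun i => v (Equiv.swap (0 : Fin (p + 1)) 1 (σ i))))) := by
  obtain ⟨q, rfl⟩ : ∃ q, p = q + 2 := ⟨p - 2, by omega⟩
  intro v
  have h01 : (0 : Fin (q + 2 + 1)) ≠ 1 := by simp [Fin.ext_iff]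
  have h02 : (0 : Fin (q + 2 + 1)) ≠ 2 := by simp [Fin.ext_iff, Nat.mod_eq_of_lt (show 2 < q + 2 + 1 by omega)]
  have h12 : (1 : Fin (q + 2 + 1)) ≠ 2 := by simp [Fin.ext_iff, Nat.mod_eq_of_lt (show 2 < q + 2 + 1 by omega)]
  -- the key computation for k ∉ {0, 1}
  have keyA : ∀ k : Fin (q + 2 + 1), k ≠ 0 → k ≠ 1 →
      β (fun j => v (Equiv.swap 1 k j)) - β (fun j => v (Equiv.swap 0 1 (Equiv.swap 1 k j)))
        = β v := by
    intro k hk0 hk1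
    have id1 : ∀ i : Fin (q + 2 + 1),
        Equiv.swap 2 k (Equiv.swap 0 2 (Equiv.swap 0 1 (Equiv.swap 2 k i)))
          = Equiv.swap 0 1 (Equiv.swap 1 k i) := by
      intro i
      by_cases hi0 : i = 0
      · subst hi0
        simp [Equiv.swap_apply_def, h01, h02, h12, h01.symm, h02.symm, h12.symm, hk0, hk1,
          hk0.symm, hk1.symm]
      by_cases hi1 : i = 1
      · subst hi1
        simp [Equiv.swap_apply_def, h01, h02, h12, h01.symm, h02.symm, h12.symm, hk0, hk1,
          hk0.symm, hk1.symm]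
      by_cases hik : i = k
      · subst hik
        simp [Equiv.swap_apply_def, h01, h02, h12, h01.symm, h02.symm, h12.symm, hk0, hk1,
          hk0.symm, hk1.symm]
      by_cases hi2 : i = 2
      · subst hi2
        have hk2 : k ≠ 2 := fun h => hik h.symm
        simp [Equiv.swap_apply_def, h01, h02, h12, h01.symm, h02.symm, h12.symm, hk0, hk1,
          hk0.symm, hk1.symm, hk2, hk2.symm]
      · simp [Equiv.swap_apply_def, h01, h02, h12, hi0, hi1, hi2, hik, hk0, hk1]
    have id2 : ∀ i : Fin (q + 2 + 1),
        Equiv.swap 2 k (Equiv.swap 0 1 (Equiv.swap 0 2 (Equiv.swap 0 1 (Equiv.swap 2 k i))))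
          = Equiv.swap 1 k i := by
      intro i
      by_cases hi0 : i = 0
      · subst hi0
        simp [Equiv.swap_apply_def, h01, h02, h12, h01.symm, h02.symm, h12.symm, hk0, hk1,
          hk0.symm, hk1.symm]
      by_cases hi1 : i = 1
      · subst hi1
        simp [Equiv.swap_apply_def, h01, h02, h12, h01.symm, h02.symm, h12.symm, hk0, hk1,
          hk0.symm, hk1.symm]
      by_cases hik : i = k
      · subst hik
        simp [Equiv.swap_apply_def, h01, h02, h12, h01.symm, h02.symm, h12.symm, hk0, hk1,
          hk0.symm, hk1.symm]
      by_cases hi2 : i = 2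
      · subst hi2
        have hk2 : k ≠ 2 := fun h => hik h.symm
        simp [Equiv.swap_apply_def, h01, h02, h12, h01.symm, h02.symm, h12.symm, hk0, hk1,
          hk0.symm, hk1.symm, hk2, hk2.symm]
      · simp [Equiv.swap_apply_def, h01, h02, h12, hi0, hi1, hi2, hik, hk0, hk1]
    have hs2k0 : Equiv.swap 2 k (0 : Fin (q + 2 + 1)) = 0 :=
      Equiv.swap_apply_of_ne_of_ne h02 (Ne.symm hk0)
    have hs2k1 : Equiv.swap 2 k (1 : Fin (q + 2 + 1)) = 1 :=
      Equiv.swap_apply_of_ne_of_ne h12 (Ne.symm hk1)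
    have t1 : β (fun i => v (Equiv.swap 2 k i)) = β v := hsym (Equiv.swap 2 k) hs2k0 hs2k1 v
    have t2 : β (fun i => v (Equiv.swap 2 k
          ((Equiv.swap (0 : Fin (q + 2 + 1)) 2 * Equiv.swap 0 1 : Equiv.Perm _) i)))
        = β (fun j => v (Equiv.swap 0 1 (Equiv.swap 1 k j))) := by
      have h := hsym (Equiv.swap 2 k) hs2k0 hs2k1
        (fun j => v (Equiv.swap 2 k (Equiv.swap 0 2 (Equiv.swap 0 1 j))))
      simp only [Equiv.Perm.mul_apply]
      refine h.symm.trans ?_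
      congr 1
      funext i
      exact congrArg v (id1 i)
    have t3 : β (fun i => v (Equiv.swap 2 k
          ((Equiv.swap (0 : Fin (q + 2 + 1)) 1 * Equiv.swap 0 2 : Equiv.Perm _) i)))
        = - β (fun j => v (Equiv.swap 1 k j)) := by
      have ha := hanti (fun j => v (Equiv.swap 2 k (Equiv.swap 0 1 (Equiv.swap 0 2 j))))
      -- ha : β (fun i => v (swap2k (swap01 (swap02 (swap01 i))))) = - β (fun j => v (swap2k (swap01 (swap02 j))))
      have h := hsym (Equiv.swap 2 k) hs2k0 hs2k1
        (fun j => v (Equiv.swap 2 k (Equiv.swap 0 1 (Equiv.swap 0 2 (Equiv.swap 0 1 j)))))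
      -- h : β (fun i => v (swap2k (swap01 (swap02 (swap01 (swap2k i)))))) = β (fun j => ...)
      have h2 : β (fun j => v (Equiv.swap 1 k j))
          = β (fun j => v (Equiv.swap 2 k (Equiv.swap 0 1 (Equiv.swap 0 2 (Equiv.swap 0 1 j))))) := by
        refine Eq.trans ?_ h
        congr 1
        funext i
        exact (congrArg v (id2 i)).symm
      simp only [Equiv.Perm.mul_apply]
      rw [h2]
      simpa using congrArg Neg.neg ha.symm
    have hc := hcirc (fun j => v (Equiv.swap 2 k j))
    rw [t1, t2, t3] at hc
    -- hc : β v + β (v ∘ swap01 ∘ swap1k) + - β (v ∘ swap1k) = 0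
    rw [add_neg_eq_zero] at hc
    rw [← hc]
    abel
  -- including the case k = 1
  have keyB : ∀ k : Fin (q + 2 + 1), k ≠ 0 →
      β (fun j => v (Equiv.swap 1 k j)) - β (fun j => v (Equiv.swap 0 1 (Equiv.swap 1 k j)))
        = β v + (if k = 1 then β v else 0) := by
    intro k hk0
    by_cases hk1 : k = 1
    · subst hk1
      rw [if_pos rfl]
      simp only [Equiv.swap_self, Equiv.refl_apply]
      rw [hanti v]
      abel
    · rw [if_neg hk1, add_zero]
      exact keyA k hk0 hk1
  -- the per-permutation identity
  have key : ∀ σ : Equiv.Perm (Fin (q + 2 + 1)), σ 0 = 0 →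
      β (fun i => v (σ i)) - β (fun i => v (Equiv.swap (0 : Fin (q + 2 + 1)) 1 (σ i)))
        = β v + (if σ 1 = 1 then β v else 0) := by
    intro σ h0
    have hk0 : σ 1 ≠ 0 := by
      intro h
      exact h01.symm (σ.injective (h.trans h0.symm))
    have h0' : (Equiv.swap 1 (σ 1) * σ) 0 = 0 := by
      rw [Equiv.Perm.mul_apply, h0]
      exact Equiv.swap_apply_of_ne_of_ne h01 (Ne.symm hk0)
    have h1' : (Equiv.swap 1 (σ 1) * σ) 1 = 1 := by
      rw [Equiv.Perm.mul_apply]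
      exact Equiv.swap_apply_right 1 (σ 1)
    have f1 : β (fun i => v (σ i)) = β (fun j => v (Equiv.swap 1 (σ 1) j)) := by
      have e1 := hsym (Equiv.swap 1 (σ 1) * σ) h0' h1' (fun j => v (Equiv.swap 1 (σ 1) j))
      rw [← e1]
      congr 1
      funext i
      rw [Equiv.Perm.mul_apply, Equiv.swap_apply_self]
    have f2 : β (fun i => v (Equiv.swap (0 : Fin (q + 2 + 1)) 1 (σ i)))
        = β (fun j => v (Equiv.swap 0 1 (Equiv.swap 1 (σ 1) j))) := by
      have e2 := hsym (Equiv.swap 1 (σ 1) * σ) h0' h1'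
        (fun j => v (Equiv.swap 0 1 (Equiv.swap 1 (σ 1) j)))
      rw [← e2]
      congr 1
      funext i
      rw [Equiv.Perm.mul_apply, Equiv.swap_apply_self]
    rw [f1, f2]
    exact keyB (σ 1) hk0
  -- summing
  have c1 : (Finset.univ.filter
      (fun σ : Equiv.Perm (Fin (q + 2 + 1)) => σ 0 = 0)).card = (q + 2).factorial :=
    card_fix0 (q + 2)
  have c2 : (Finset.univ.filter
      (fun σ : Equiv.Perm (Fin (q + 2 + 1)) => σ 0 = 0 ∧ σ 1 = 1)).card = (q + 1).factorial :=
    card_fix01 (q + 1)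
  have hsum : (∑ σ ∈ Finset.univ.filter
        (fun σ : Equiv.Perm (Fin (q + 2 + 1)) => σ 0 = 0), β (fun i => v (σ i)))
      - (∑ σ ∈ Finset.univ.filter
        (fun σ : Equiv.Perm (Fin (q + 2 + 1)) => σ 0 = 0),
        β (fun i => v (Equiv.swap (0 : Fin (q + 2 + 1)) 1 (σ i))))
      = ((q + 2).factorial + (q + 1).factorial) • β v := by
    rw [← Finset.sum_sub_distrib]
    rw [Finset.sum_congr rfl (fun σ hσ => key σ ((Finset.mem_filter.mp hσ).2))]
    rw [Finset.sum_add_distrib, Finset.sum_const, ← Finset.sum_filter, Finset.sum_const]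
    rw [Finset.filter_filter]
    rw [c1, c2, add_smul]
  rw [hsum]
  rw [← Nat.cast_smul_eq_nsmul K, smul_smul]
  have hfac : ((q + 2 : ℕ) : K) / ((Nat.factorial (q + 2 + 1) : ℕ) : K)
      * (((q + 2).factorial + (q + 1).factorial : ℕ) : K) = 1 := by
    have hnat : (q + 2) * ((q + 2).factorial + (q + 1).factorial)
        = Nat.factorial (q + 2 + 1) := by
      rw [Nat.factorial_succ (q + 2), Nat.factorial_succ (q + 1)]
      ring
    rw [div_mul_eq_mul_div, ← Nat.cast_mul, hnat, div_self]
    exact Nat.cast_ne_zero.mpr (Nat.factorial_ne_zero _)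
  rw [hfac, one_smul]
end

section
/- Let V and U be vector spaces over a field of characteristic zero. Let R : V × V × V → U be a trilinear map, antisymmetric in its first two entries, which satisfies the algebraic Bianchi identity R(v₁, v₂, v₃) + R(v₂, v₃, v₁) + R(v₃, v₁, v₂) = 0 for all v₁, v₂, v₃ ∈ V. Then a trilinear map S : V × V × V → U which is symmetric in its last two entries satisfies 3R = Alt₂ S if and only if S = Sym_{2,3} R + σ for some fully symmetric trilinear map σ : V × V × V → U. -/
/-!
Antisymmetry and the Bianchi identity give `R(v₂, v₃, v₁) = R(v₁, v₃, v₂) - R(v₁, v₂, v₃)`, and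
hence `Alt₂ (Sym₂₃ R) = 3R`. So `3R = Alt₂ S` says exactly that `σ := S - Sym₂₃ R` is symmetric in
its first two entries. As `σ` is symmetric in its last two entries as well, and adjacent
transpositions generate the symmetric group, `σ` is then fully symmetric.
-/

open Equiv (swap Perm)

theorem Fin.apply_comp_perm_eq_of_adjacent_swaps {α β : Type*} {n : ℕ}
    (f : (Fin (n + 1) → α) → β)
    (h : ∀ (i : Fin n) (v : Fin (n + 1) → α), f (v ∘ swap i.castSucc i.succ) = f v)
    (τ : Perm (Fin (n + 1))) (v : Fin (n + 1) → α) : f (v ∘ τ) = f v := by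
  have hτ : τ ∈ Submonoid.closure (Set.range fun i : Fin n ↦ swap i.castSucc i.succ) := by
    rw [Perm.mclosure_swap_castSucc_succ]; trivial
  induction hτ using Submonoid.closure_induction generalizing v with
  | mem _ hs => obtain ⟨i, rfl⟩ := hs; exact h i v
  | one => rfl
  | mul τ₁ τ₂ _ _ ih₁ ih₂ => exact (ih₂ (v ∘ τ₁)).trans (ih₁ v)

theorem Fin.apply_comp_perm_eq_of_swap01_of_swap12 {α β : Type*} (f : (Fin 3 → α) → β)
    (h01 : ∀ a b c : α, f ![b, a, c] = f ![a, b, c])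
    (h12 : ∀ a b c : α, f ![a, c, b] = f ![a, b, c])
    (τ : Perm (Fin 3)) (v : Fin 3 → α) : f (v ∘ τ) = f v := by
  refine Fin.apply_comp_perm_eq_of_adjacent_swaps f (fun i w => ?_) τ v
  fin_cases i
  · convert h01 (w 0) (w 1) (w 2) using 2 <;> ext j <;> fin_cases j <;> rfl
  · convert h12 (w 0) (w 1) (w 2) using 2 <;> ext j <;> fin_cases j <;> rfl

namespace MultilinearMap

variable {K V U : Type*} [Semiring K] [AddCommMonoid V] [Module K V] [AddCommGroup U] [Module K U]
  (R : MultilinearMap K (fun _ : Fin 3 => V) U)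

def sym23 : MultilinearMap K (fun _ : Fin 3 => V) U :=
  R + R.domDomCongr (swap 1 2)

@[simp]
theorem sym23_apply (a b c : V) : R.sym23 ![a, b, c] = R ![a, b, c] + R ![a, c, b] := by
  simp only [sym23, add_apply, domDomCongr_apply]
  congr 2; ext i; fin_cases i <;> rfl

theorem sub_sym23_apply_swap01 (hR : ∀ a b c : V, R ![b, a, c] = - R ![a, b, c])
    (hBianchi : ∀ a b c : V, R ![a, b, c] + R ![b, c, a] + R ![c, a, b] = 0) (a b c : V) :
    R.sym23 ![a, b, c] - R.sym23 ![b, a, c] = (3 : K) • R ![a, b, c] := by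
  have hcyc : R ![b, c, a] = R ![a, c, b] - R ![a, b, c] := by
    have h := hBianchi a b c
    rw [hR a c b] at h
    rw [← sub_eq_zero, ← h]
    abel
  rw [ofNat_smul_eq_nsmul, sym23_apply, sym23_apply, hR a b c, hcyc]
  abel

end MultilinearMap

open MultilinearMap in
theorem bianchi_alt2_characterization_general
    {K V U : Type*} [Field K] [AddCommGroup V] [Module K V]
    [AddCommGroup U] [Module K U]
    (R S : MultilinearMap K (fun _ : Fin 3 => V) U)
    (hR : ∀ v₁ v₂ v₃ : V, R ![v₂, v₁, v₃] = - R ![v₁, v₂, v₃])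
    (hBianchi : ∀ v₁ v₂ v₃ : V,
      R ![v₁, v₂, v₃] + R ![v₂, v₃, v₁] + R ![v₃, v₁, v₂] = 0)
    (hS : ∀ v₁ v₂ v₃ : V, S ![v₁, v₂, v₃] = S ![v₁, v₃, v₂]) :
    (∀ v₁ v₂ v₃ : V,
      (3 : K) • R ![v₁, v₂, v₃] = S ![v₁, v₂, v₃] - S ![v₂, v₁, v₃]) ↔
    (∃ σ : MultilinearMap K (fun _ : Fin 3 => V) U,
      (∀ τ : Equiv.Perm (Fin 3), ∀ v : Fin 3 → V, σ (fun i => v (τ i)) = σ v) ∧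
      ∀ v₁ v₂ v₃ : V,
        S ![v₁, v₂, v₃] = (R ![v₁, v₂, v₃] + R ![v₁, v₃, v₂]) + σ ![v₁, v₂, v₃]) := by
  have hAlt := R.sub_sym23_apply_swap01 hR hBianchi
  constructor
  · intro h3R
    refine ⟨S - R.sym23, Fin.apply_comp_perm_eq_of_swap01_of_swap12 _ (fun a b c => ?_)
      (fun a b c => ?_), fun a b c => ?_⟩
    · simp only [sub_apply]
      linear_combination (norm := module) h3R a b c + hAlt a b c
    · rw [sub_apply, sub_apply, sym23_apply, sym23_apply, hS a c b, add_comm (R ![a, c, b])]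
    · rw [sub_apply, ← sym23_apply, add_sub_cancel]
  · rintro ⟨σ, hσ, hSσ⟩ a b c
    have hσ01 : σ ![b, a, c] = σ ![a, b, c] := by
      convert hσ (swap 0 1) ![a, b, c] using 2
      ext i; fin_cases i <;> rfl
    rw [← hAlt, hSσ a b c, hSσ b a c, hσ01, ← sym23_apply, ← sym23_apply,
      add_sub_add_right_eq_sub]

/-- Pointwise content of Corollary 6.2: if `R` is trilinear, antisymmetric in its
first two entries, and satisfies the algebraic Bianchi identity, then a trilinear
`S` symmetric in its last two entries satisfies `3R = Alt₂ S` iff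
`S = Sym_{2,3} R + σ` for some fully symmetric trilinear `σ`. -/
theorem bianchi_alt2_characterization
    {K V U : Type*} [Field K] [CharZero K] [AddCommGroup V] [Module K V]
    [AddCommGroup U] [Module K U]
    (R S : MultilinearMap K (fun _ : Fin 3 => V) U)
    (hR : ∀ v₁ v₂ v₃ : V, R ![v₂, v₁, v₃] = - R ![v₁, v₂, v₃])
    (hBianchi : ∀ v₁ v₂ v₃ : V,
      R ![v₁, v₂, v₃] + R ![v₂, v₃, v₁] + R ![v₃, v₁, v₂] = 0)
    (hS : ∀ v₁ v₂ v₃ : V, S ![v₁, v₂, v₃] = S ![v₁, v₃, v₂]) :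
    (∀ v₁ v₂ v₃ : V,
      (3 : K) • R ![v₁, v₂, v₃] = S ![v₁, v₂, v₃] - S ![v₂, v₁, v₃]) ↔
    (∃ σ : MultilinearMap K (fun _ : Fin 3 => V) U,
      (∀ τ : Equiv.Perm (Fin 3), ∀ v : Fin 3 → V, σ (fun i => v (τ i)) = σ v) ∧
      ∀ v₁ v₂ v₃ : V,
        S ![v₁, v₂, v₃] = (R ![v₁, v₂, v₃] + R ![v₁, v₃, v₂]) + σ ![v₁, v₂, v₃]) :=
  bianchi_alt2_characterization_general R S hR hBianchi hS
end

section
/- Let V and U be vector spaces over a field of characteristic zero. Let ρ : V⁴ → U be a 4-linear map which satisfies the circular identity with respect to its first three entries, i.e. ρ(v₁,v₂,v₃,v₄) + ρ(v₂,v₃,v₁,v₄) + ρ(v₃,v₁,v₂,v₄) = 0, and with respect to its last three entries, i.e. ρ(v₁,v₂,v₃,v₄) + ρ(v₁,v₃,v₄,v₂) + ρ(v₁,v₄,v₂,v₃) = 0, and which is antisymmetric in its second and third entries. Define ρ₂(v₁,v₂,v₃,v₄) := ρ(v₂,v₁,v₃,v₄) and ρ₃(v₁,v₂,v₃,v₄)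 := ρ(v₂,v₃,v₁,v₄). Then a 4-linear map S : V⁴ → U which is symmetric in its last three entries satisfies Alt₂(8·Sym_{3,4} ρ − S) = 0 if and only if S = −2·Sym_{2,3,4} ρ₂ + σ, equivalently S = 2·Sym_{2,3,4} ρ₃ + σ, for some fully symmetric 4-linear map σ : V⁴ → U. -/
/-- `Sym_{2,3,4}` (without normalizing coefficient) of a 4-entry expression. -/
def Sym234 {V U : Type*} [AddCommMonoid U] (θ : V → V → V → V → U)
    (a b c d : V) : U :=
  θ a b c d + θ a b d c + θ a c b d + θ a c d b + θ a d b c + θ a d c b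

/-!
Put `σ := S + 2·Sym_{2,3,4} ρ₂`. It is symmetric in its last three entries because `S` is. The
circular identities and the antisymmetry of `ρ` make `8·Sym_{3,4} ρ + 2·Sym_{2,3,4} ρ₂` symmetric in
its first two entries, so the `Alt₂` condition says exactly that `σ` is symmetric in its first two
entries too; as adjacent transpositions generate `S₄`, this means `σ` is fully symmetric. The second
form of `S` holds because `Sym_{2,3,4} ρ₂ + Sym_{2,3,4} ρ₃ = -Sym_{2,3,4} ρ` by the first circular
identity, and `Sym_{2,3,4} ρ = 0` by antisymmetry.
-/

open Equiv

theorem Equiv.Perm.comp_invariant_of_swap_castSucc_succ {α β : Type*} {n : ℕ}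
    (f : (Fin (n + 1) → α) → β)
    (h : ∀ (i : Fin n) (v : Fin (n + 1) → α), f (fun j => v (swap i.castSucc i.succ j)) = f v)
    (τ : Perm (Fin (n + 1))) (v : Fin (n + 1) → α) : f (fun j => v (τ j)) = f v := by
  have hτ : τ ∈ Submonoid.closure (Set.range fun i : Fin n ↦ swap i.castSucc i.succ) := by
    rw [Perm.mclosure_swap_castSucc_succ]; trivial
  induction hτ using Submonoid.closure_induction generalizing v with
  | mem τ hτ => obtain ⟨i, rfl⟩ := hτ; exact h i v
  | one => rfl
  | mul τ₁ τ₂ _ _ ih₁ ih₂ => exact (ih₂ fun j => v (τ₁ j)).trans (ih₁ v)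

theorem fin4_comp_eq_vecCons {α : Type*} (v : Fin 4 → α) (f : Fin 4 → Fin 4) :
    (fun i => v (f i)) = ![v (f 0), v (f 1), v (f 2), v (f 3)] := by
  funext i; fin_cases i <;> rfl

theorem fin4_comp_invariant_of_swaps {α β : Type*} (f : (Fin 4 → α) → β)
    (h01 : ∀ a b c d, f ![b, a, c, d] = f ![a, b, c, d])
    (h12 : ∀ a b c d, f ![a, c, b, d] = f ![a, b, c, d])
    (h23 : ∀ a b c d, f ![a, b, d, c] = f ![a, b, c, d])
    (τ : Perm (Fin 4)) (v : Fin 4 → α) : f (fun i => v (τ i)) = f v := by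
  refine Perm.comp_invariant_of_swap_castSucc_succ f (fun i w => ?_) τ v
  have hw : w = ![w 0, w 1, w 2, w 3] := (FinVec.etaExpand_eq w).symm
  rw [fin4_comp_eq_vecCons]
  conv_rhs => rw [hw]
  fin_cases i
  · simpa [swap_apply_of_ne_of_ne] using h01 _ _ _ _
  · simpa [swap_apply_of_ne_of_ne] using h12 _ _ _ _
  · simpa [swap_apply_of_ne_of_ne] using h23 _ _ _ _

section Sym234

variable {V U : Type*}

theorem sym234_swap_12 [AddCommMonoid U] (θ : V → V → V → V → U) (a b c d : V) :
    Sym234 θ a c b d = Sym234 θ a b c d := by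
  simp only [Sym234]; abel

theorem sym234_swap_23 [AddCommMonoid U] (θ : V → V → V → V → U) (a b c d : V) :
    Sym234 θ a b d c = Sym234 θ a b c d := by
  simp only [Sym234]; abel

variable [AddCommGroup U] {r : V → V → V → V → U}

theorem sym234_eq_zero_of_antisymm (hanti : ∀ a b c d, r a c b d = -r a b c d) (a b c d : V) :
    Sym234 r a b c d = 0 := by
  simp only [Sym234, hanti a c b, hanti a d b, hanti a d c]; abel

theorem sym234_cycle_eq_neg_sym234_swap
    (hc1 : ∀ a b c d, r a b c d + r b c a d + r c a b d = 0)
    (hanti : ∀ a b c d, r a c b d = -r a b c d) (a b c d : V) :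
    Sym234 (fun a b c d => r b c a d) a b c d = -Sym234 (fun a b c d => r b a c d) a b c d := by
  have h := sym234_eq_zero_of_antisymm hanti a b c d
  simp only [Sym234] at h ⊢
  linear_combination (norm := abel) hc1 a b c d + hc1 a b d c + hc1 a c b d + hc1 a c d b
    + hc1 a d b c + hc1 a d c b - h

theorem sym234_swap_sub_sym234_swap
    (hc1 : ∀ a b c d, r a b c d + r b c a d + r c a b d = 0)
    (hc2 : ∀ a b c d, r a b c d + r a c d b + r a d b c = 0)
    (hanti : ∀ a b c d, r a c b d = -r a b c d) (a b c d : V) :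
    Sym234 (fun a b c d => r b a c d) a b c d - Sym234 (fun a b c d => r b a c d) b a c d
      = 4 • (r b a c d + r b a d c - r a b c d - r a b d c) := by
  simp only [Sym234]
  linear_combination (norm := module)
    (2 : ℤ) • hc1 a b c d - hc2 a b c d + (2 : ℤ) • hanti a b c d + hc1 a b d c
    + (2 : ℤ) • hanti a b d c - (2 : ℤ) • hc1 a c b d + hc1 a c d b - hc1 a d b c
    + hc2 b a c d - (2 : ℤ) • hanti b a c d - (2 : ℤ) • hanti b a d c - hc1 b c d a
    - hc2 c a b d + hc2 c a d b

end Sym234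

namespace MultilinearMap

variable {R V U : Type*} [Semiring R] [AddCommMonoid V] [Module R V] [AddCommMonoid U]
  [Module R U]

noncomputable def sym234 (θ : MultilinearMap R (fun _ : Fin 4 => V) U) :
    MultilinearMap R (fun _ : Fin 4 => V) U :=
  θ + θ.domDomCongr (.ofBijective ![0, 1, 3, 2] (by decide))
    + θ.domDomCongr (.ofBijective ![0, 2, 1, 3] (by decide))
    + θ.domDomCongr (.ofBijective ![0, 2, 3, 1] (by decide))
    + θ.domDomCongr (.ofBijective ![0, 3, 1, 2] (by decide))
    + θ.domDomCongr (.ofBijective ![0, 3, 2, 1] (by decide))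

theorem sym234_apply (θ : MultilinearMap R (fun _ : Fin 4 => V) U) (a b c d : V) :
    θ.sym234 ![a, b, c, d] = Sym234 (fun a b c d => θ ![a, b, c, d]) a b c d := by
  simp [sym234, Sym234, fin4_comp_eq_vecCons]

end MultilinearMap

theorem alt_sym_curvature_general
    {K V U : Type*} [Field K] [AddCommGroup V] [Module K V]
    [AddCommGroup U] [Module K U]
    (ρ S : MultilinearMap K (fun _ : Fin 4 => V) U)
    (hc1 : ∀ v₁ v₂ v₃ v₄ : V,
      ρ ![v₁, v₂, v₃, v₄] + ρ ![v₂, v₃, v₁, v₄] + ρ ![v₃, v₁, v₂, v₄] = 0)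
    (hc2 : ∀ v₁ v₂ v₃ v₄ : V,
      ρ ![v₁, v₂, v₃, v₄] + ρ ![v₁, v₃, v₄, v₂] + ρ ![v₁, v₄, v₂, v₃] = 0)
    (hanti : ∀ v₁ v₂ v₃ v₄ : V, ρ ![v₁, v₃, v₂, v₄] = - ρ ![v₁, v₂, v₃, v₄])
    (hS : ∀ σ : Equiv.Perm (Fin 4), σ 0 = 0 →
      ∀ v : Fin 4 → V, S (fun i => v (σ i)) = S v) :
    (∀ v₁ v₂ v₃ v₄ : V,
      ((8 : K) • (ρ ![v₁, v₂, v₃, v₄] + ρ ![v₁, v₂, v₄, v₃]) - S ![v₁, v₂, v₃, v₄])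
      - ((8 : K) • (ρ ![v₂, v₁, v₃, v₄] + ρ ![v₂, v₁, v₄, v₃]) - S ![v₂, v₁, v₃, v₄])
      = 0) ↔
    (∃ σ : MultilinearMap K (fun _ : Fin 4 => V) U,
      (∀ τ : Equiv.Perm (Fin 4), ∀ v : Fin 4 → V, σ (fun i => v (τ i)) = σ v) ∧
      (∀ v₁ v₂ v₃ v₄ : V,
        S ![v₁, v₂, v₃, v₄] =
          (-2 : K) • Sym234 (fun a b c d => ρ ![b, a, c, d]) v₁ v₂ v₃ v₄
          + σ ![v₁, v₂, v₃, v₄]) ∧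
      (∀ v₁ v₂ v₃ v₄ : V,
        S ![v₁, v₂, v₃, v₄] =
          (2 : K) • Sym234 (fun a b c d => ρ ![b, c, a, d]) v₁ v₂ v₃ v₄
          + σ ![v₁, v₂, v₃, v₄])) := by
  have key : ∀ a b c d : V,
      Sym234 (fun a b c d => ρ ![b, a, c, d]) a b c d
        - Sym234 (fun a b c d => ρ ![b, a, c, d]) b a c d
      = 4 • (ρ ![b, a, c, d] + ρ ![b, a, d, c] - ρ ![a, b, c, d] - ρ ![a, b, d, c]) :=
    sym234_swap_sub_sym234_swap hc1 hc2 hanti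
  constructor
  · intro halt
    have hS12 (a b c d : V) : S ![a, c, b, d] = S ![a, b, c, d] := by
      simpa [fin4_comp_eq_vecCons, swap_apply_of_ne_of_ne] using hS (swap 1 2) rfl ![a, b, c, d]
    have hS23 (a b c d : V) : S ![a, b, d, c] = S ![a, b, c, d] := by
      simpa [fin4_comp_eq_vecCons, swap_apply_of_ne_of_ne] using hS (swap 2 3) rfl ![a, b, c, d]
    set σ := S + (2 : K) • (ρ.domDomCongr (swap 0 1)).sym234
    have hσ (a b c d : V) : σ ![a, b, c, d]
        = S ![a, b, c, d] + (2 : K) • Sym234 (fun a b c d => ρ ![b, a, c, d]) a b c d := by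
      simp [σ, MultilinearMap.sym234_apply, fin4_comp_eq_vecCons, swap_apply_of_ne_of_ne]
    refine ⟨σ, fin4_comp_invariant_of_swaps σ (fun a b c d => ?_) (fun a b c d => ?_)
      (fun a b c d => ?_), fun a b c d => ?_, fun a b c d => ?_⟩
    · rw [hσ, hσ]
      linear_combination (norm := module) halt a b c d - (2 : K) • key a b c d
    · rw [hσ, hσ, hS12, sym234_swap_12]
    · rw [hσ, hσ, hS23, sym234_swap_23]
    · rw [hσ]; module
    · rw [hσ, sym234_cycle_eq_neg_sym234_swap hc1 hanti]; module
  · rintro ⟨σ, hσ, hSσ, -⟩ a b c d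
    have hσ01 : σ ![b, a, c, d] = σ ![a, b, c, d] := by
      simpa [fin4_comp_eq_vecCons, swap_apply_of_ne_of_ne] using hσ (swap 0 1) ![a, b, c, d]
    rw [hSσ, hSσ, hσ01]
    linear_combination (norm := module) (2 : K) • key a b c d

/-- Lemma 7.3 of the paper, pointwise: for a 4-linear `ρ` satisfying the circular
identity in its first three and last three entries and antisymmetric in its second
and third entries, a 4-linear `S` symmetric in its last three entries satisfies
`Alt₂(8·Sym_{3,4}ρ − S) = 0` iff `S = −2·Sym_{2,3,4}ρ₂ + σ = 2·Sym_{2,3,4}ρ₃ + σ`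
for some fully symmetric `σ`. -/
theorem alt_sym_curvature
    {K V U : Type*} [Field K] [CharZero K] [AddCommGroup V] [Module K V]
    [AddCommGroup U] [Module K U]
    (ρ S : MultilinearMap K (fun _ : Fin 4 => V) U)
    (hc1 : ∀ v₁ v₂ v₃ v₄ : V,
      ρ ![v₁, v₂, v₃, v₄] + ρ ![v₂, v₃, v₁, v₄] + ρ ![v₃, v₁, v₂, v₄] = 0)
    (hc2 : ∀ v₁ v₂ v₃ v₄ : V,
      ρ ![v₁, v₂, v₃, v₄] + ρ ![v₁, v₃, v₄, v₂] + ρ ![v₁, v₄, v₂, v₃] = 0)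
    (hanti : ∀ v₁ v₂ v₃ v₄ : V, ρ ![v₁, v₃, v₂, v₄] = - ρ ![v₁, v₂, v₃, v₄])
    (hS : ∀ σ : Equiv.Perm (Fin 4), σ 0 = 0 →
      ∀ v : Fin 4 → V, S (fun i => v (σ i)) = S v) :
    (∀ v₁ v₂ v₃ v₄ : V,
      ((8 : K) • (ρ ![v₁, v₂, v₃, v₄] + ρ ![v₁, v₂, v₄, v₃]) - S ![v₁, v₂, v₃, v₄])
      - ((8 : K) • (ρ ![v₂, v₁, v₃, v₄] + ρ ![v₂, v₁, v₄, v₃]) - S ![v₂, v₁, v₃, v₄])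
      = 0) ↔
    (∃ σ : MultilinearMap K (fun _ : Fin 4 => V) U,
      (∀ τ : Equiv.Perm (Fin 4), ∀ v : Fin 4 → V, σ (fun i => v (τ i)) = σ v) ∧
      (∀ v₁ v₂ v₃ v₄ : V,
        S ![v₁, v₂, v₃, v₄] =
          (-2 : K) • Sym234 (fun a b c d => ρ ![b, a, c, d]) v₁ v₂ v₃ v₄
          + σ ![v₁, v₂, v₃, v₄]) ∧
      (∀ v₁ v₂ v₃ v₄ : V,
        S ![v₁, v₂, v₃, v₄] =
          (2 : K) • Sym234 (fun a b c d => ρ ![b, c, a, d]) v₁ v₂ v₃ v₄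
          + σ ![v₁, v₂, v₃, v₄])) :=
  alt_sym_curvature_general ρ S hc1 hc2 hanti hS
end

section
/- Let V and U be vector spaces over a field of characteristic zero. Let ρ : V⁴ → U be a 4-linear map which satisfies the circular identity with respect to its first three entries, i.e. ρ(v₁,v₂,v₃,v₄) + ρ(v₂,v₃,v₁,v₄) + ρ(v₃,v₁,v₂,v₄) = 0, and with respect to its last three entries, i.e. ρ(v₁,v₂,v₃,v₄) + ρ(v₁,v₃,v₄,v₂) + ρ(v₁,v₄,v₂,v₃) = 0, and which is antisymmetric in its second and third entries. Then Circ( Alt₂( Sym_{3,4} ρ ) ) = 0. -/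
/-! The terms of `Circ (Alt₂ (Sym_{3,4} ρ))` with `v₄` in the last slot form
`Circ ρ(v₁, v₂, v₃, v₄) - Circ ρ(v₂, v₁, v₃, v₄)`, which vanishes by the first circular identity.
The remaining terms pair up as `ρ(a, b, v₄, c) - ρ(a, c, v₄, b)`, which by antisymmetry and the
second circular identity equals `ρ(a, b, c, v₄)`; their cyclic sum is again
`Circ ρ(v₁, v₂, v₃, v₄) = 0`. -/

section CircularIdentities

variable {V U : Type*} [AddCommGroup U] {f : V → V → V → V → U}

theorem sub_eq_of_circular_last_of_antisymm
    (hc : ∀ a b c d, f a b c d + f a c d b + f a d b c = 0)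
    (hanti : ∀ a b c d, f a c b d = -f a b c d) (a b c d : V) :
    f a b d c - f a c d b = f a b c d := by
  linear_combination (norm := abel1) hc a b d c - hanti a b c d - hanti a d c b

theorem circ_alt_sym_eq_zero_of_circular
    (hc₁ : ∀ a b c d, f a b c d + f b c a d + f c a b d = 0)
    (hc₂ : ∀ a b c d, f a b c d + f a c d b + f a d b c = 0)
    (hanti : ∀ a b c d, f a c b d = -f a b c d) (v₁ v₂ v₃ v₄ : V) :
    (f v₁ v₂ v₃ v₄ + f v₁ v₂ v₄ v₃ - f v₂ v₁ v₃ v₄ - f v₂ v₁ v₄ v₃)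
      + (f v₂ v₃ v₁ v₄ + f v₂ v₃ v₄ v₁ - f v₃ v₂ v₁ v₄ - f v₃ v₂ v₄ v₁)
      + (f v₃ v₁ v₂ v₄ + f v₃ v₁ v₄ v₂ - f v₁ v₃ v₂ v₄ - f v₁ v₃ v₄ v₂) = 0 := by
  have pair := sub_eq_of_circular_last_of_antisymm hc₂ hanti
  linear_combination (norm := abel1) 2 • hc₁ v₁ v₂ v₃ v₄ - hc₁ v₂ v₁ v₃ v₄
    + pair v₁ v₂ v₃ v₄ + pair v₂ v₃ v₁ v₄ + pair v₃ v₁ v₂ v₄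

end CircularIdentities

theorem circ_alt_sym_vanishes_general
    {K V U : Type*} [Field K] [AddCommGroup V] [Module K V]
    [AddCommGroup U] [Module K U]
    (ρ : MultilinearMap K (fun _ : Fin 4 => V) U)
    (hc1 : ∀ v₁ v₂ v₃ v₄ : V,
      ρ ![v₁, v₂, v₃, v₄] + ρ ![v₂, v₃, v₁, v₄] + ρ ![v₃, v₁, v₂, v₄] = 0)
    (hc2 : ∀ v₁ v₂ v₃ v₄ : V,
      ρ ![v₁, v₂, v₃, v₄] + ρ ![v₁, v₃, v₄, v₂] + ρ ![v₁, v₄, v₂, v₃] = 0)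
    (hanti : ∀ v₁ v₂ v₃ v₄ : V, ρ ![v₁, v₃, v₂, v₄] = - ρ ![v₁, v₂, v₃, v₄]) :
    ∀ v₁ v₂ v₃ v₄ : V,
      (ρ ![v₁, v₂, v₃, v₄] + ρ ![v₁, v₂, v₄, v₃]
        - ρ ![v₂, v₁, v₃, v₄] - ρ ![v₂, v₁, v₄, v₃])
      + (ρ ![v₂, v₃, v₁, v₄] + ρ ![v₂, v₃, v₄, v₁]
        - ρ ![v₃, v₂, v₁, v₄] - ρ ![v₃, v₂, v₄, v₁])
      + (ρ ![v₃, v₁, v₂, v₄] + ρ ![v₃, v₁, v₄, v₂]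
        - ρ ![v₁, v₃, v₂, v₄] - ρ ![v₁, v₃, v₄, v₂]) = 0 :=
  circ_alt_sym_eq_zero_of_circular (f := fun a b c d => ρ ![a, b, c, d]) hc1 hc2 hanti

/-- For a 4-linear `ρ` satisfying the circular identity in its first three and
last three entries and antisymmetric in its second and third entries, one has
`Circ(Alt₂(Sym_{3,4} ρ)) = 0` (all operators without normalizing coefficients). -/
theorem circ_alt_sym_vanishes
    {K V U : Type*} [Field K] [CharZero K] [AddCommGroup V] [Module K V]
    [AddCommGroup U] [Module K U]
    (ρ : MultilinearMap K (fun _ : Fin 4 => V) U)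
    (hc1 : ∀ v₁ v₂ v₃ v₄ : V,
      ρ ![v₁, v₂, v₃, v₄] + ρ ![v₂, v₃, v₁, v₄] + ρ ![v₃, v₁, v₂, v₄] = 0)
    (hc2 : ∀ v₁ v₂ v₃ v₄ : V,
      ρ ![v₁, v₂, v₃, v₄] + ρ ![v₁, v₃, v₄, v₂] + ρ ![v₁, v₄, v₂, v₃] = 0)
    (hanti : ∀ v₁ v₂ v₃ v₄ : V, ρ ![v₁, v₃, v₂, v₄] = - ρ ![v₁, v₂, v₃, v₄]) :
    ∀ v₁ v₂ v₃ v₄ : V,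
      (ρ ![v₁, v₂, v₃, v₄] + ρ ![v₁, v₂, v₄, v₃]
        - ρ ![v₂, v₁, v₃, v₄] - ρ ![v₂, v₁, v₄, v₃])
      + (ρ ![v₂, v₃, v₁, v₄] + ρ ![v₂, v₃, v₄, v₁]
        - ρ ![v₃, v₂, v₁, v₄] - ρ ![v₃, v₂, v₄, v₁])
      + (ρ ![v₃, v₁, v₂, v₄] + ρ ![v₃, v₁, v₄, v₂]
        - ρ ![v₁, v₃, v₂, v₄] - ρ ![v₁, v₃, v₄, v₂]) = 0 :=
  circ_alt_sym_vanishes_general ρ hc1 hc2 hanti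
end

section
/- Let V and U be vector spaces over a field of characteristic zero. Let ρ : V⁴ → U be a 4-linear map which satisfies the circular identity with respect to its first three entries, i.e. ρ(v₁,v₂,v₃,v₄) + ρ(v₂,v₃,v₁,v₄) + ρ(v₃,v₁,v₂,v₄) = 0, and with respect to its last three entries, i.e. ρ(v₁,v₂,v₃,v₄) + ρ(v₁,v₃,v₄,v₂) + ρ(v₁,v₄,v₂,v₃) = 0, and which is antisymmetric in its second and third entries. Define ρ₂(v₁,v₂,v₃,v₄) := ρ(v₂,v₁,v₃,v₄) and ρ₃(v₁,v₂,v₃,v₄) := ρ(v₂,v₃,v₁,v₄). Then Sym_{2,3,4}( Alt₂( Sym_{3,4} ρ ) ) = −2·Sym_{2,3,4} ρ₂ = 2·Sym_{2,3,4} ρ₃. -/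
/-- `Alt₂(Sym_{3,4} ρ)` (without normalizing coefficients) of a 4-linear map. -/
def Alt2Sym34 {K V U : Type*} [Field K] [AddCommGroup V] [Module K V]
    [AddCommGroup U] [Module K U]
    (ρ : MultilinearMap K (fun _ : Fin 4 => V) U) (a b c d : V) : U :=
  ρ ![a, b, c, d] + ρ ![a, b, d, c] - ρ ![b, a, c, d] - ρ ![b, a, d, c]

/-!
Symmetrizing over the last three entries annihilates any expression whose cyclic sum in those
entries vanishes, so the second circular identity gives `Sym_{2,3,4} ρ = 0`. Since `Sym_{2,3,4}`
absorbs `Sym_{3,4}`, this leaves `Sym_{2,3,4}(Alt₂(Sym_{3,4} ρ)) = 2 Sym ρ - 2 Sym ρ₂ = -2 Sym ρ₂`.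
Symmetrizing the first circular identity over entries `2,3,4` gives
`Sym ρ + Sym ρ₃ + Sym ρ₂ = 0`, the last term arising as a relabelling, whence `Sym ρ₃ = -Sym ρ₂`.
-/

section Sym234

variable {V U : Type*} [AddCommGroup U] {θ : V → V → V → V → U} {a b c d : V}

theorem sym234_eq_zero_of_cyclic (h : ∀ x y z, θ a x y z + θ a y z x + θ a z x y = 0) :
    Sym234 θ a b c d = 0 :=
  calc Sym234 θ a b c d
      = (θ a b c d + θ a c d b + θ a d b c) + (θ a b d c + θ a d c b + θ a c b d) := by
        unfold Sym234; abel
    _ = 0 := by rw [h, h, add_zero]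

theorem sym234_rotate_eq_neg_sym234_swap
    (h : ∀ x y z w, θ x y z w + θ y z x w + θ z x y w = 0) (h₀ : Sym234 θ a b c d = 0) :
    Sym234 (fun a b c d => θ b c a d) a b c d = -Sym234 (fun a b c d => θ b a c d) a b c d := by
  unfold Sym234 at h₀ ⊢
  linear_combination (norm := abel) h a b c d + h a b d c + h a c b d + h a c d b
    + h a d b c + h a d c b - h₀

end Sym234

theorem sym234_alt2Sym34 {K V U : Type*} [Field K] [AddCommGroup V] [Module K V]
    [AddCommGroup U] [Module K U] (ρ : MultilinearMap K (fun _ : Fin 4 => V) U) (a b c d : V) :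
    Sym234 (Alt2Sym34 ρ) a b c d = (2 : K) • (Sym234 (fun a b c d => ρ ![a, b, c, d]) a b c d
      - Sym234 (fun a b c d => ρ ![b, a, c, d]) a b c d) := by
  rw [two_smul]
  unfold Sym234 Alt2Sym34
  abel

theorem sym_alt_sym_eq_general
    {K V U : Type*} [Field K] [AddCommGroup V] [Module K V]
    [AddCommGroup U] [Module K U]
    (ρ : MultilinearMap K (fun _ : Fin 4 => V) U)
    (hc1 : ∀ v₁ v₂ v₃ v₄ : V,
      ρ ![v₁, v₂, v₃, v₄] + ρ ![v₂, v₃, v₁, v₄] + ρ ![v₃, v₁, v₂, v₄] = 0)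
    (hc2 : ∀ v₁ v₂ v₃ v₄ : V,
      ρ ![v₁, v₂, v₃, v₄] + ρ ![v₁, v₃, v₄, v₂] + ρ ![v₁, v₄, v₂, v₃] = 0) :
    ∀ v₁ v₂ v₃ v₄ : V,
      Sym234 (Alt2Sym34 ρ) v₁ v₂ v₃ v₄ =
        (-2 : K) • Sym234 (fun a b c d => ρ ![b, a, c, d]) v₁ v₂ v₃ v₄ ∧
      (-2 : K) • Sym234 (fun a b c d => ρ ![b, a, c, d]) v₁ v₂ v₃ v₄ =
        (2 : K) • Sym234 (fun a b c d => ρ ![b, c, a, d]) v₁ v₂ v₃ v₄ := by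
  intro v₁ v₂ v₃ v₄
  have hsym : Sym234 (fun a b c d => ρ ![a, b, c, d]) v₁ v₂ v₃ v₄ = 0 :=
    sym234_eq_zero_of_cyclic (hc2 v₁)
  constructor
  · rw [sym234_alt2Sym34, hsym, zero_sub, smul_neg, neg_smul]
  · rw [sym234_rotate_eq_neg_sym234_swap hc1 hsym, smul_neg, neg_smul]

/-- For a 4-linear `ρ` satisfying the circular identity in its first three and
last three entries and antisymmetric in its second and third entries,
`Sym_{2,3,4}(Alt₂(Sym_{3,4} ρ)) = −2·Sym_{2,3,4} ρ₂ = 2·Sym_{2,3,4} ρ₃`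
where `ρ₂(v₁,v₂,v₃,v₄) = ρ(v₂,v₁,v₃,v₄)` and `ρ₃(v₁,v₂,v₃,v₄) = ρ(v₂,v₃,v₁,v₄)`. -/
theorem sym_alt_sym_eq
    {K V U : Type*} [Field K] [CharZero K] [AddCommGroup V] [Module K V]
    [AddCommGroup U] [Module K U]
    (ρ : MultilinearMap K (fun _ : Fin 4 => V) U)
    (hc1 : ∀ v₁ v₂ v₃ v₄ : V,
      ρ ![v₁, v₂, v₃, v₄] + ρ ![v₂, v₃, v₁, v₄] + ρ ![v₃, v₁, v₂, v₄] = 0)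
    (hc2 : ∀ v₁ v₂ v₃ v₄ : V,
      ρ ![v₁, v₂, v₃, v₄] + ρ ![v₁, v₃, v₄, v₂] + ρ ![v₁, v₄, v₂, v₃] = 0)
    (hanti : ∀ v₁ v₂ v₃ v₄ : V, ρ ![v₁, v₃, v₂, v₄] = - ρ ![v₁, v₂, v₃, v₄]) :
    ∀ v₁ v₂ v₃ v₄ : V,
      Sym234 (Alt2Sym34 ρ) v₁ v₂ v₃ v₄ =
        (-2 : K) • Sym234 (fun a b c d => ρ ![b, a, c, d]) v₁ v₂ v₃ v₄ ∧
      (-2 : K) • Sym234 (fun a b c d => ρ ![b, a, c, d]) v₁ v₂ v₃ v₄ =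
        (2 : K) • Sym234 (fun a b c d => ρ ![b, c, a, d]) v₁ v₂ v₃ v₄ :=
  sym_alt_sym_eq_general ρ hc1 hc2
end

section
/- Fix an integer n ≥ 2. For indices p, k, j, l ∈ {1,…,n} define g_{p,k,j,l} := (p+k)(j+l) and R^p_{j,k,l} := g_{p,k,j,l} + g_{l,j,k,p} − g_{p,j,k,l} − g_{l,k,j,p}, and for indices p, j, k, l, h, r ∈ {1,…,n} define ρ^p_{j,k,l,h,r} := Σ_{s=1}^{n} (R^p_{j,k,s} + R^p_{j,s,k}) · R^s_{l,h,r}. Then ρ^p_{j,k,l,h,r} = 4(l−h) · Σ_{s=1}^{n} [(j−k)(p−s) + (j−s)(p−k)](s−r); in particular ρ^1_{2,1,1,2,1} = 4 · Σ_{s=2}^{n} (s−1)², which is strictly positive. -/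
/-- The coefficients `g_{p,k,j,l} = (p+k)(j+l)`. -/
def gcoef (p k j l : ℕ) : ℤ := ((p : ℤ) + k) * ((j : ℤ) + l)

/-- The curvature coefficients at the origin:
`R^p_{j,k,l} = g_{p,k,j,l} + g_{l,j,k,p} − g_{p,j,k,l} − g_{l,k,j,p}`. -/
def Rcoef (p j k l : ℕ) : ℤ :=
  gcoef p k j l + gcoef l j k p - gcoef p j k l - gcoef l k j p

/-- `ρ^p_{j,k,l,h,r} = Σ_{s=1}^{n} (R^p_{j,k,s} + R^p_{j,s,k}) · R^s_{l,h,r}`. -/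
def rhocoef (n p j k l h r : ℕ) : ℤ :=
  ∑ s ∈ Finset.Icc 1 n, (Rcoef p j k s + Rcoef p j s k) * Rcoef s l h r

/-- Core computation of the paper's lemma producing metrics violating the second
order integrability equation: the explicit formula for `ρ^p_{j,k,l,h,r}` and the
strict positivity of `ρ^1_{2,1,1,2,1} = 4·Σ_{s=2}^n (s−1)²`. -/
theorem rho_formula_and_positivity (n : ℕ) (hn : 2 ≤ n) :
    (∀ p j k l h r : ℕ, p ∈ Finset.Icc 1 n → j ∈ Finset.Icc 1 n →
      k ∈ Finset.Icc 1 n → l ∈ Finset.Icc 1 n → h ∈ Finset.Icc 1 n →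
      r ∈ Finset.Icc 1 n →
      rhocoef n p j k l h r =
        4 * ((l : ℤ) - (h : ℤ)) *
          ∑ s ∈ Finset.Icc 1 n,
            (((j : ℤ) - (k : ℤ)) * ((p : ℤ) - (s : ℤ))
              + ((j : ℤ) - (s : ℤ)) * ((p : ℤ) - (k : ℤ))) * ((s : ℤ) - (r : ℤ))) ∧
    rhocoef n 1 2 1 1 2 1 = 4 * ∑ s ∈ Finset.Icc 2 n, ((s : ℤ) - 1) ^ 2 ∧
    0 < rhocoef n 1 2 1 1 2 1 := by

  have key : ∀ p j k l h r : ℕ,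
      rhocoef n p j k l h r =
        4 * ((l : ℤ) - (h : ℤ)) *
          ∑ s ∈ Finset.Icc 1 n,
            (((j : ℤ) - (k : ℤ)) * ((p : ℤ) - (s : ℤ))
              + ((j : ℤ) - (s : ℤ)) * ((p : ℤ) - (k : ℤ))) * ((s : ℤ) - (r : ℤ)) := by
    intro p j k l h r
    unfold rhocoef
    rw [Finset.mul_sum]
    refine Finset.sum_congr rfl fun s _ => ?_
    simp only [Rcoef, gcoef]
    ring
  have h1n : (1 : ℕ) ≤ n := le_trans one_le_two hn
  have hval : rhocoef n 1 2 1 1 2 1 = 4 * ∑ s ∈ Finset.Icc 2 n, ((s : ℤ) - 1) ^ 2 := by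
    rw [key]
    have hsplit : Finset.Icc 1 n = insert 1 (Finset.Icc 2 n) := by
      ext x; simp only [Finset.mem_Icc, Finset.mem_insert]; omega
    have e1 : ∑ s ∈ Finset.Icc 1 n,
        ((((2:ℕ):ℤ) - ((1:ℕ):ℤ)) * (((1:ℕ):ℤ) - (s:ℤ)) +
          (((2:ℕ):ℤ) - (s:ℤ)) * (((1:ℕ):ℤ) - ((1:ℕ):ℤ))) * ((s:ℤ) - ((1:ℕ):ℤ))
        = ∑ s ∈ Finset.Icc 1 n, -(((s:ℤ) - 1) ^ 2) := by
      refine Finset.sum_congr rfl fun s _ => ?_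
      push_cast; ring
    rw [e1, Finset.sum_neg_distrib]
    have e2 : ∑ s ∈ Finset.Icc 1 n, ((s:ℤ)-1)^2 = ∑ s ∈ Finset.Icc 2 n, ((s:ℤ)-1)^2 := by
      refine (Finset.sum_subset (Finset.Icc_subset_Icc_left one_le_two) fun x hx hnx => ?_).symm
      have hx1 : x = 1 := by simp [Finset.mem_Icc] at hx hnx; omega
      simp [hx1]
    rw [e2]; push_cast; ring
  refine ⟨fun p j k l h r _ _ _ _ _ _ => key p j k l h r, hval, ?_⟩
  rw [hval]
  have h2 : (2 : ℕ) ∈ Finset.Icc 2 n := by simp [hn]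
  have : ((2:ℤ) - 1) ^ 2 ≤ ∑ s ∈ Finset.Icc 2 n, ((s : ℤ) - 1) ^ 2 :=
    Finset.single_le_sum (f := fun s : ℕ => ((s:ℤ)-1)^2) (fun i _ => sq_nonneg _) h2
  nlinarith
end
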